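/- arXiv:1811.04587 — 2 statements merged into one kernel-verified Lean document; each statement's English description precedes it below -/
import Mathlib

section
/- Let h > 0, ρ = h + √(1+h²), and k ∈ ℕ_0^d a nonzero multi-index. Define c_j = k_j/‖k‖_2 and ρ̂_j = c_j h + √(1 + (c_j h)²). Then ∏_{j=1}^d ρ̂_j^{k_j} ≥ ρ^{‖k‖_2}. -/
open Real in
lemma sinh_convexOn : ConvexOn ℝ (Set.Ici (0:ℝ)) Real.sinh := by
  apply convexOn_of_deriv2_nonneg (convex_Ici 0) Real.continuous_sinh.continuousOn
    Real.differentiable_sinh.differentiableOn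
  · rw [Real.deriv_sinh]
    exact Real.differentiable_cosh.differentiableOn
  · intro x hx
    simp only [Function.iterate_succ, Function.iterate_zero, Function.comp_apply, id,
      Real.deriv_sinh, Real.deriv_cosh]
    rw [interior_Ici] at hx
    exact (Real.sinh_pos_iff.mpr hx).le

open Real in
lemma sinh_mul_le {c t : ℝ} (hc0 : 0 ≤ c) (hc1 : c ≤ 1) (ht : 0 ≤ t) :
    Real.sinh (c * t) ≤ c * Real.sinh t := by
  have := sinh_convexOn.2 (Set.mem_Ici.mpr ht) (Set.mem_Ici.mpr le_rfl)
    hc0 (by linarith : (0:ℝ) ≤ 1 - c) (by ring)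
  simpa [smul_eq_mul] using this

open Real in
lemma arsinh_mul_ge {c t : ℝ} (hc0 : 0 ≤ c) (hc1 : c ≤ 1) (ht : 0 ≤ t) :
    c * Real.arsinh t ≤ Real.arsinh (c * t) := by
  have h1 : Real.sinh (c * Real.arsinh t) ≤ c * t := by
    have := sinh_mul_le hc0 hc1 (Real.arsinh_nonneg_iff.mpr ht)
    rwa [Real.sinh_arsinh] at this
  calc c * Real.arsinh t = Real.arsinh (Real.sinh (c * Real.arsinh t)) := by
        rw [Real.arsinh_sinh]
    _ ≤ Real.arsinh (c * t) := Real.arsinh_le_arsinh.mpr h1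

open Finset in
theorem rhohat_prod_ge (d : ℕ) (k : Fin d → ℕ) (hk : k ≠ 0) (h : ℝ) (hh : 0 < h)
    (ρ : ℝ) (hρ : ρ = h + Real.sqrt (1 + h ^ 2))
    (nk : ℝ) (hnk : nk = Real.sqrt (∑ j, (k j : ℝ) ^ 2))
    (c : Fin d → ℝ) (hc : ∀ j, c j = (k j : ℝ) / nk)
    (ρhat : Fin d → ℝ) (hρhat : ∀ j, ρhat j = c j * h + Real.sqrt (1 + (c j * h) ^ 2)) :
    ρ ^ nk ≤ ∏ j, ρhat j ^ (k j : ℕ) := by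
  -- basic facts
  have hsum_nonneg : (0:ℝ) ≤ ∑ j, (k j : ℝ) ^ 2 :=
    Finset.sum_nonneg fun j _ => sq_nonneg _
  have hsum_pos : (0:ℝ) < ∑ j, (k j : ℝ) ^ 2 := by
    obtain ⟨j, hj⟩ : ∃ j, k j ≠ 0 := by
      by_contra hcon
      push_neg at hcon
      exact hk (funext fun j => hcon j)
    have : (0:ℝ) < (k j : ℝ) ^ 2 := by positivity
    exact Finset.sum_pos' (fun i _ => sq_nonneg _) ⟨j, Finset.mem_univ j, this⟩
  have hnk_pos : 0 < nk := by rw [hnk]; exact Real.sqrt_pos.mpr hsum_pos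
  have hnk_sq : nk ^ 2 = ∑ j, (k j : ℝ) ^ 2 := by
    rw [hnk, Real.sq_sqrt hsum_nonneg]
  have hc0 : ∀ j, 0 ≤ c j := fun j => by
    rw [hc j]; positivity
  have hc1 : ∀ j, c j ≤ 1 := fun j => by
    rw [hc j, div_le_one hnk_pos, hnk]
    calc (k j : ℝ) = Real.sqrt ((k j : ℝ) ^ 2) := by
          rw [Real.sqrt_sq (Nat.cast_nonneg _)]
      _ ≤ Real.sqrt (∑ i, (k i : ℝ) ^ 2) := by
          apply Real.sqrt_le_sqrt
          exact Finset.single_le_sum (fun i _ => sq_nonneg ((k i : ℝ))) (Finset.mem_univ j)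
  -- express via exp/arsinh
  have hρ_exp : ρ = Real.exp (Real.arsinh h) := by rw [Real.exp_arsinh, hρ]
  have hρhat_exp : ∀ j, ρhat j = Real.exp (Real.arsinh (c j * h)) := fun j => by
    rw [Real.exp_arsinh, hρhat j]
  have hρ_pos : 0 < ρ := by rw [hρ_exp]; exact Real.exp_pos _
  have hlhs : ρ ^ nk = Real.exp (nk * Real.arsinh h) := by
    rw [Real.rpow_def_of_pos hρ_pos, hρ_exp, Real.log_exp, mul_comm]
  have hrhs : (∏ j, ρhat j ^ (k j : ℕ)) =
      Real.exp (∑ j, (k j : ℝ) * Real.arsinh (c j * h)) := by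
    rw [Real.exp_sum]
    apply Finset.prod_congr rfl
    intro j _
    rw [hρhat_exp j, ← Real.exp_nat_mul]
  rw [hlhs, hrhs, Real.exp_le_exp]
  have key : ∀ j, (k j : ℝ) * (c j * Real.arsinh h) ≤ (k j : ℝ) * Real.arsinh (c j * h) :=
    fun j => mul_le_mul_of_nonneg_left (arsinh_mul_ge (hc0 j) (hc1 j) hh.le) (Nat.cast_nonneg _)
  calc nk * Real.arsinh h = (∑ j, (k j : ℝ) * c j) * Real.arsinh h := by
        congr 1
        have : ∀ j ∈ Finset.univ, (k j : ℝ) * c j = (k j : ℝ) ^ 2 / nk := by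
          intro j _
          rw [hc j]; ring
        rw [Finset.sum_congr rfl this, ← Finset.sum_div, ← hnk_sq, sq,
          mul_div_assoc, div_self hnk_pos.ne', mul_one]
    _ = ∑ j, (k j : ℝ) * (c j * Real.arsinh h) := by
        rw [Finset.sum_mul]; apply Finset.sum_congr rfl; intros; ring
    _ ≤ ∑ j, (k j : ℝ) * Real.arsinh (c j * h) :=
        Finset.sum_le_sum fun j _ => key j
end

section
/- Let λ > 0 and k ≥ 1. Then the ratio k^{1-λ} Γ(k+2λ)/(Γ(2λ) Γ(k+1)) ≤ (Υ_k^{2λ,1}/Γ(2λ)) · k^λ, where Υ_k^{2λ,1} = exp( (2λ-1)/(2k) + 1/(12(k+2λ-1)) + (2λ-1)²/k ). -/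
/-!
`log ∘ Γ` is convex on `(0, ∞)` and its unit increments are `log Γ (x + 1) - log Γ x = log x`.
Comparing the secant of `log ∘ Γ` between `k + 1` and `k + s` with a unit secant at one of
its ends bounds `log Γ (k + s) - log Γ (k + 1)` by `(s - 1)` times `log k`, `log (k + 1)` or
`log (k + s - 1)`, according as `s ≤ 1`, `1 ≤ s ≤ 2` or `2 ≤ s`; the last two logarithms
exceed `log k` by at most `1 / k` and `(s - 1) / k`, and the exponent of `Υ_k^{s,1}` absorbs
these errors.
-/

open Real Set

/-- `Υ_k^{s,1} = exp (upsilonExponent s k)` in the paper's notation. -/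
noncomputable def upsilonExponent (s k : ℝ) : ℝ :=
  (s - 1) / (2 * k) + 1 / (12 * (k + s - 1)) + (s - 1) ^ 2 / k

lemma upsilonExponent_nonneg {s k : ℝ} (hks : 0 < k + s - 1) (hs : s ≤ 1) :
    0 ≤ upsilonExponent s k := by
  have hk : 0 < k := by linarith
  have h12 : 1 / (12 * k) ≤ 1 / (12 * (k + s - 1)) :=
    one_div_le_one_div_of_le (by linarith) (by linarith)
  have hsq : 0 ≤ ((s - 1) / 2 + (s - 1) ^ 2 + 1 / 12) / k := by
    apply div_nonneg _ hk.le
    nlinarith [sq_nonneg (s - 1 + 1 / 4)]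
  have hsplit : upsilonExponent s k
      = ((s - 1) / 2 + (s - 1) ^ 2 + 1 / 12) / k - 1 / (12 * k) + 1 / (12 * (k + s - 1)) := by
    unfold upsilonExponent; field_simp; ring
  linarith

lemma div_le_upsilonExponent {s k : ℝ} (hk : 1 ≤ k) (hs : 1 ≤ s) :
    (s - 1) / k ≤ upsilonExponent s k := by
  set t := s - 1
  have hk₀ : 0 < k := by linarith
  have hkt : 0 < 12 * (k + s - 1) := by linarith
  have hpoly : (t / 2 - t ^ 2) * (12 * (k + s - 1)) ≤ 1 * k := by
    rw [show k + s - 1 = k + t by ring]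
    nlinarith [mul_nonneg (by linarith : (0:ℝ) ≤ t) (sq_nonneg (4 * t - 1)),
      sq_nonneg (32 * t - 9),
      mul_nonneg (by linarith : (0:ℝ) ≤ k - 1) (sq_nonneg (4 * t - 1))]
  have hkey : (t / 2 - t ^ 2) / k ≤ 1 / (12 * (k + s - 1)) :=
    (div_le_div_iff₀ hk₀ hkt).mpr hpoly
  have hsplit : t / k = t / (2 * k) + (t / 2 - t ^ 2) / k + t ^ 2 / k := by
    field_simp; ring
  unfold upsilonExponent
  linarith

lemma sq_div_le_upsilonExponent {s k : ℝ} (hk : 0 < k) (hs : 1 ≤ s) :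
    (s - 1) ^ 2 / k ≤ upsilonExponent s k := by
  have h₁ : 0 ≤ (s - 1) / (2 * k) := div_nonneg (by linarith) (by linarith)
  have h₂ : 0 ≤ 1 / (12 * (k + s - 1)) := div_nonneg zero_le_one (by linarith)
  unfold upsilonExponent
  linarith

lemma log_add_le_log_add_div {x c : ℝ} (hx : 0 < x) (hxc : 0 < x + c) :
    log (x + c) ≤ log x + c / x := by
  have h := log_le_sub_one_of_pos (div_pos hxc hx)
  rw [log_div hxc.ne' hx.ne', show (x + c) / x - 1 = c / x by field_simp; ring] at h
  linarith

lemma log_Gamma_add_one_sub {x : ℝ} (hx : 0 < x) :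
    log (Gamma (x + 1)) - log (Gamma x) = log x := by
  rw [Gamma_add_one hx.ne', log_mul hx.ne' (Gamma_pos_of_pos hx).ne']
  ring

section SecantBounds

variable {x y : ℝ}

lemma log_Gamma_sub_le_of_le_add_one (hx : 0 < x) (hxy : x ≤ y) (hyx : y ≤ x + 1) :
    log (Gamma y) - log (Gamma x) ≤ (y - x) * log x := by
  rcases hxy.eq_or_lt with rfl | hxy
  · simp
  have hsec := convexOn_log_Gamma.secant_mono (a := x) hx (hx.trans hxy)
    (show x + 1 ∈ Ioi 0 by simp only [mem_Ioi]; linarith) hxy.ne' (by linarith) hyx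
  simp only [Function.comp, add_sub_cancel_left, div_one, log_Gamma_add_one_sub hx] at hsec
  rwa [div_le_iff₀ (by linarith), mul_comm] at hsec

lemma log_Gamma_sub_le_of_add_one_le (hx : 0 < x) (hxy : x + 1 ≤ y) :
    log (Gamma y) - log (Gamma x) ≤ (y - x) * log (y - 1) := by
  have hy₁ : 0 < y - 1 := by linarith
  have hy₀ : y ∈ Ioi 0 := by simp only [mem_Ioi]; linarith
  have hsec := convexOn_log_Gamma.secant_mono hy₀
    hx hy₁ (by linarith) (by linarith) (by linarith)
  have hstep : -(log (Gamma (y - 1)) - log (Gamma y)) = log (y - 1) := by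
    rw [neg_sub, ← log_Gamma_add_one_sub hy₁, sub_add_cancel]
  simp only [Function.comp, show y - 1 - y = -1 by ring, div_neg, div_one, hstep] at hsec
  rw [div_le_iff_of_neg (by linarith)] at hsec
  linarith

lemma mul_log_sub_one_le_log_Gamma_sub (hy : 1 < y) (hxy : y - 1 ≤ x) (hyx : x ≤ y) :
    (y - x) * log (y - 1) ≤ log (Gamma y) - log (Gamma x) := by
  rcases hyx.eq_or_lt with rfl | hyx
  · simp
  have hy₁ : 0 < y - 1 := by linarith
  have hy₀ : y ∈ Ioi 0 := by simp only [mem_Ioi]; linarith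
  have hsec := convexOn_log_Gamma.secant_mono hy₀
    hy₁ (hy₁.trans_le hxy) (by linarith) hyx.ne hxy
  have hstep : -(log (Gamma (y - 1)) - log (Gamma y)) = log (y - 1) := by
    rw [neg_sub, ← log_Gamma_add_one_sub hy₁, sub_add_cancel]
  simp only [Function.comp, show y - 1 - y = -1 by ring, div_neg, div_one, hstep] at hsec
  rw [le_div_iff_of_neg (by linarith)] at hsec
  linarith

end SecantBounds

lemma log_Gamma_add_sub_log_Gamma_add_one_le {s k : ℝ} (hs : 0 < s) (hk : 1 ≤ k) :
    log (Gamma (k + s)) - log (Gamma (k + 1)) ≤ (s - 1) * log k + upsilonExponent s k := by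
  have hk₀ : 0 < k := by linarith
  rcases le_total s 1 with hs₁ | hs₁
  · have h := mul_log_sub_one_le_log_Gamma_sub (x := k + s) (y := k + 1) (by linarith)
      (by linarith) (by linarith)
    rw [add_sub_cancel_right] at h
    have := upsilonExponent_nonneg (show 0 < k + s - 1 by linarith) hs₁
    nlinarith
  rcases le_total s 2 with hs₂ | hs₂
  · have h := log_Gamma_sub_le_of_le_add_one (x := k + 1) (y := k + s) (by linarith)
      (by linarith) (by linarith)
    have hlog := log_add_le_log_add_div hk₀ (show 0 < k + 1 by linarith)
    have := div_le_upsilonExponent hk hs₁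
    calc log (Gamma (k + s)) - log (Gamma (k + 1)) ≤ (s - 1) * log (k + 1) := by
          rwa [add_sub_add_left_eq_sub] at h
      _ ≤ (s - 1) * (log k + 1 / k) := mul_le_mul_of_nonneg_left hlog (by linarith)
      _ = (s - 1) * log k + (s - 1) / k := by ring
      _ ≤ _ := by linarith
  · have h := log_Gamma_sub_le_of_add_one_le (x := k + 1) (y := k + s) (by linarith) (by linarith)
    have hlog := log_add_le_log_add_div hk₀ (show 0 < k + (s - 1) by linarith)
    have := sq_div_le_upsilonExponent hk₀ hs₁
    calc log (Gamma (k + s)) - log (Gamma (k + 1)) ≤ (s - 1) * log (k + (s - 1)) := by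
          rwa [add_sub_add_left_eq_sub, add_sub_assoc] at h
      _ ≤ (s - 1) * (log k + (s - 1) / k) := mul_le_mul_of_nonneg_left hlog (by linarith)
      _ = (s - 1) * log k + (s - 1) ^ 2 / k := by ring
      _ ≤ _ := by linarith

lemma Gamma_add_le_exp_upsilonExponent_mul {s k : ℝ} (hs : 0 < s) (hk : 1 ≤ k) :
    Gamma (k + s) ≤ exp (upsilonExponent s k) * k ^ (s - 1) * Gamma (k + 1) := by
  have hk₀ : 0 < k := by linarith
  have hΓ : 0 < Gamma (k + s) := Gamma_pos_of_pos (by linarith)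
  have hΓ₁ : 0 < Gamma (k + 1) := Gamma_pos_of_pos (by linarith)
  rw [← log_le_log_iff hΓ (by positivity), log_mul (by positivity) hΓ₁.ne',
    log_mul (by positivity) (by positivity), log_exp, log_rpow hk₀]
  linarith [log_Gamma_add_sub_log_Gamma_add_one_le hs hk]

theorem gegenbauer_normalization_growth (lam : ℝ) (hlam : 0 < lam) (k : ℕ) (hk : 1 ≤ k) :
    (k : ℝ) ^ ((1:ℝ) - lam) * Real.Gamma ((k : ℝ) + 2 * lam) /
        (Real.Gamma (2 * lam) * Real.Gamma ((k : ℝ) + 1))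
      ≤ Real.exp ((2 * lam - 1) / (2 * k) + 1 / (12 * ((k : ℝ) + 2 * lam - 1))
          + (2 * lam - 1) ^ 2 / k) / Real.Gamma (2 * lam) * (k : ℝ) ^ lam := by
  have hk₁ : (1 : ℝ) ≤ k := by exact_mod_cast hk
  have hk₀ : (0 : ℝ) < k := by linarith
  have hΓ : 0 < Gamma (2 * lam) := Gamma_pos_of_pos (by linarith)
  have hΓ₁ : 0 < Gamma ((k : ℝ) + 1) := Gamma_pos_of_pos (by linarith)
  have hpow : (k : ℝ) ^ ((1 : ℝ) - lam) * (k : ℝ) ^ (2 * lam - 1) = (k : ℝ) ^ lam := by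
    rw [← rpow_add hk₀]; ring_nf
  rw [div_le_iff₀ (mul_pos hΓ hΓ₁)]
  calc (k : ℝ) ^ ((1 : ℝ) - lam) * Gamma (k + 2 * lam)
      ≤ (k : ℝ) ^ ((1 : ℝ) - lam) *
          (exp (upsilonExponent (2 * lam) k) * (k : ℝ) ^ (2 * lam - 1) * Gamma (k + 1)) :=
        mul_le_mul_of_nonneg_left (Gamma_add_le_exp_upsilonExponent_mul (by linarith) hk₁)
          (by positivity)
    _ = _ := by rw [← hpow, upsilonExponent]; field_simp
end
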